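/- Fix ν > 11/8 and K > 0. There exists ε₀ > 0 such that for every ε ∈ (0, ε₀], every real a with |a − 2ε| ≤ K·ε^ν, and every integer l ≥ 2, the following inequality holds: (1 − √(η·a) + (b_ε/√(η·a))/(2l−2−ξ)) · (1 + √(η·a) − (b_ε/√(η·a))/(2l−ξ)) · (1 + a − 2b_ε/(2l−1) − (1−c_ε)/(2l−1)²) ≥ 1. -/

import Mathlib

set_option maxHeartbeats 1000000

/-- `b_ε := (1+ε)(1+√ε)·√(ε²+2ε)` -/
noncomputable def bEps (ε : ℝ) : ℝ := (1 + ε) * (1 + Real.sqrt ε) * Real.sqrt (ε ^ 2 + 2 * ε)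

/-- `c_ε := ((1+√ε)²−1)·(ε²+2ε)` -/
noncomputable def cEps (ε : ℝ) : ℝ := ((1 + Real.sqrt ε) ^ 2 - 1) * (ε ^ 2 + 2 * ε)


private lemma sqle {x z : ℝ} (hz : 0 ≤ z) (h : x^2 ≤ z^2) (hx : 0 ≤ x) : x ≤ z := by
  nlinarith

private lemma abnd {t ξ a : ℝ} (ht0 : 0 < t) (ht : t ≤ 1/1000) (hξ0 : 0 < ξ) (hξ : ξ ≤ 1/10)
    (ha : (a - 2*t^2)^2 ≤ t^4*(t*ξ)/100) : |a - 2*t^2| ≤ t^2/1000 := by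
  have htξ : t*ξ ≤ 1/10000 := by nlinarith
  have hq : (a - 2*t^2)^2 ≤ (t^2/1000)^2 := by
    nlinarith [mul_le_mul_of_nonneg_left htξ (pow_pos ht0 4).le]
  have h1 := Real.sqrt_le_sqrt hq
  rwa [Real.sqrt_sq_eq_abs, Real.sqrt_sq (by positivity)] at h1

private lemma bbnd {t b : ℝ} (ht0 : 0 < t) (ht : t ≤ 1/1000)
    (hb0 : 0 < b) (hb2 : b^2 = (1+t^2)^2*(1+t)^2*(t^4+2*t^2)) :
    (141/100)*t ≤ b ∧ b ≤ (15/10)*t := by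
  have p2 : t^2 ≤ t*(1/1000) := by nlinarith
  have p3 : t^3 ≤ t*(1/1000)^2 := by nlinarith [mul_le_mul_of_nonneg_right p2 ht0.le, mul_le_mul_of_nonneg_left ht (mul_pos ht0 ht0).le]
  have p4 : t^4 ≤ t*(1/1000)^3 := by nlinarith [mul_le_mul_of_nonneg_right p3 ht0.le, mul_le_mul_of_nonneg_left ht (pow_pos ht0 3).le]
  have p5 : t^5 ≤ t*(1/1000)^4 := by nlinarith [mul_le_mul_of_nonneg_right p4 ht0.le, mul_le_mul_of_nonneg_left ht (pow_pos ht0 4).le]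
  have p6 : t^6 ≤ t*(1/1000)^5 := by nlinarith [mul_le_mul_of_nonneg_right p5 ht0.le, mul_le_mul_of_nonneg_left ht (pow_pos ht0 5).le]
  have h1 : (1:ℝ) ≤ (1+t^2)^2*(1+t)^2 := by nlinarith [sq_nonneg t, sq_nonneg (t+t^2)]
  have h2 : (1+t^2)^2*(1+t)^2 ≤ 101/100 := by nlinarith [p2,p3,p4,p5,p6]
  have h3 : 2*t^2 ≤ t^4+2*t^2 := by nlinarith [pow_pos ht0 4]
  have h4 : t^4+2*t^2 ≤ (2001/1000)*t^2 := by nlinarith [mul_le_mul_of_nonneg_right p2 (mul_pos ht0 ht0).le]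
  have hbsqL : 2*t^2 ≤ b^2 := by
    rw [hb2]
    calc 2*t^2 = 1*(2*t^2) := by ring
      _ ≤ ((1+t^2)^2*(1+t)^2)*(t^4+2*t^2) := mul_le_mul h1 h3 (by positivity) (le_trans zero_le_one h1)
  have hbsqU : b^2 ≤ (225/100)*t^2 := by
    rw [hb2]
    have := mul_le_mul h2 h4 (by positivity : (0:ℝ) ≤ t^4+2*t^2) (by norm_num : (0:ℝ) ≤ 101/100)
    nlinarith [pow_pos ht0 2]
  constructor
  · nlinarith [sq_nonneg (b - (141/100)*t), mul_pos ht0 hb0]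
  · exact sqle (by positivity) (by nlinarith) hb0.le

private lemma sbnd {t a s : ℝ} (ht0 : 0 < t) (ht : t ≤ 1/1000)
    (haL : (1999/1000)*t^2 ≤ a) (haU : a ≤ (2001/1000)*t^2)
    (hs0 : 0 < s) (hs2 : s^2 = (1-t)*a) :
    (141/100)*t ≤ s ∧ s ≤ (15/10)*t := by
  have hssqL : (1995/1000)*t^2 ≤ s^2 := by
    rw [hs2]; nlinarith [pow_pos ht0 2, mul_le_mul_of_nonneg_left haL ht0.le]
  have hssqU : s^2 ≤ (2001/1000)*t^2 := by
    rw [hs2]; nlinarith [pow_pos ht0 2, mul_le_mul_of_nonneg_left haU ht0.le]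
  constructor
  · nlinarith [sq_nonneg (s - (141/100)*t), mul_pos ht0 hs0]
  · exact sqle (by positivity) (by nlinarith) hs0.le

private lemma cbnd {t c : ℝ} (ht0 : 0 < t) (ht : t ≤ 1/1000)
    (hc : c = (2*t+t^2)*(t^4+2*t^2)) : 0 ≤ c ∧ c ≤ 1 := by
  constructor
  · rw [hc]; positivity
  · rw [hc]; nlinarith [pow_pos ht0 2, pow_pos ht0 3, pow_pos ht0 4, pow_pos ht0 5, pow_pos ht0 6, pow_pos ht0 7,
      mul_le_mul ht ht ht0.le (by norm_num : (0:ℝ) ≤ 1/1000)]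

-- the crucial bound (b-s)^2 ≤ b*ξ*s^2
private lemma crux {t ξ a b s : ℝ} (ht0 : 0 < t) (ht : t ≤ 1/1000)
    (hξ0 : 0 < ξ) (hξ : ξ ≤ 1/10) (hξt10 : 10*t ≤ ξ)
    (ha : (a - 2*t^2)^2 ≤ t^4*(t*ξ)/100)
    (hb0 : 0 < b) (hbL : (141/100)*t ≤ b)
    (hb2 : b^2 = (1+t^2)^2*(1+t)^2*(t^4+2*t^2))
    (hsL : (141/100)*t ≤ s)
    (hs2 : s^2 = (1-t)*a) :
    (b-s)^2 ≤ b*ξ*s^2 := by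
  have p2 : t^2 ≤ t*(1/1000) := by nlinarith
  have p3 : t^3 ≤ t*(1/1000)^2 := by nlinarith [mul_le_mul_of_nonneg_right p2 ht0.le, mul_le_mul_of_nonneg_left ht (mul_pos ht0 ht0).le]
  have p4 : t^4 ≤ t*(1/1000)^3 := by nlinarith [mul_le_mul_of_nonneg_right p3 ht0.le, mul_le_mul_of_nonneg_left ht (pow_pos ht0 3).le]
  have p5 : t^5 ≤ t*(1/1000)^4 := by nlinarith [mul_le_mul_of_nonneg_right p4 ht0.le, mul_le_mul_of_nonneg_left ht (pow_pos ht0 4).le]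
  have p6 : t^6 ≤ t*(1/1000)^5 := by nlinarith [mul_le_mul_of_nonneg_right p5 ht0.le, mul_le_mul_of_nonneg_left ht (pow_pos ht0 5).le]
  have p7 : t^7 ≤ t*(1/1000)^6 := by nlinarith [mul_le_mul_of_nonneg_right p6 ht0.le, mul_le_mul_of_nonneg_left ht (pow_pos ht0 6).le]
  have p8 : t^8 ≤ t*(1/1000)^7 := by nlinarith [mul_le_mul_of_nonneg_right p7 ht0.le, mul_le_mul_of_nonneg_left ht (pow_pos ht0 7).le]
  have hH0 : (0:ℝ) ≤ 6*t+7*t^2+10*t^3+9*t^4+8*t^5+5*t^6+2*t^7+t^8 := by positivity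
  have hH : 6*t+7*t^2+10*t^3+9*t^4+8*t^5+5*t^6+2*t^7+t^8 ≤ (601/100)*t := by
    linarith [p2,p3,p4,p5,p6,p7,p8]
  have hw : b^2 - s^2 = t^2*(6*t+7*t^2+10*t^3+9*t^4+8*t^5+5*t^6+2*t^7+t^8) - (1-t)*(a-2*t^2) := by
    rw [hb2, hs2]; ring
  have hx2 : (t^2*(6*t+7*t^2+10*t^3+9*t^4+8*t^5+5*t^6+2*t^7+t^8))^2 ≤ (362/10)*t^6 := by
    calc (t^2*(6*t+7*t^2+10*t^3+9*t^4+8*t^5+5*t^6+2*t^7+t^8))^2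
        ≤ (t^2*((601/100)*t))^2 :=
          pow_le_pow_left₀ (by positivity) (mul_le_mul_of_nonneg_left hH (by positivity)) 2
      _ ≤ (362/10)*t^6 := by
          have h6 := pow_pos ht0 6
          nlinarith [h6]
  have hz2 : ((1-t)*(a-2*t^2))^2 ≤ t^4*(t*ξ)/100 := by
    have h1t : (1-t)^2 ≤ 1 := by nlinarith
    calc ((1-t)*(a-2*t^2))^2 = (1-t)^2*(a-2*t^2)^2 := by ring
      _ ≤ 1*(a-2*t^2)^2 := mul_le_mul_of_nonneg_right h1t (sq_nonneg _)
      _ ≤ t^4*(t*ξ)/100 := by linarith [ha]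
  have hw2 : (b^2-s^2)^2 ≤ (724/10)*t^6 + t^5*ξ/50 := by
    rw [hw]
    have hsq := sq_nonneg (t^2*(6*t+7*t^2+10*t^3+9*t^4+8*t^5+5*t^6+2*t^7+t^8) + (1-t)*(a-2*t^2))
    nlinarith [hx2, hz2, hsq]
  have hssqL : (19881/10000)*t^2 ≤ s^2 := by
    calc (19881/10000)*t^2 = ((141/100)*t)^2 := by ring
      _ ≤ s^2 := pow_le_pow_left₀ (by positivity) hsL 2
  have e1 : (b-s)^2*(b+s)^2 = (b^2-s^2)^2 := by ring
  have e2 : ((282/100)*t)^2 ≤ (b+s)^2 := pow_le_pow_left₀ (by positivity) (by linarith) 2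
  have e3 : (b-s)^2*((282/100)*t)^2 ≤ (724/10)*t^6 + t^5*ξ/50 := by
    calc (b-s)^2*((282/100)*t)^2 ≤ (b-s)^2*(b+s)^2 :=
          mul_le_mul_of_nonneg_left e2 (sq_nonneg _)
      _ = (b^2-s^2)^2 := e1
      _ ≤ (724/10)*t^6 + t^5*ξ/50 := hw2
  have e4 : ((141/100)*t)*ξ*((19881/10000)*t^2) ≤ b*ξ*s^2 := by
    have h5 : (141/100)*t*ξ ≤ b*ξ := mul_le_mul_of_nonneg_right hbL hξ0.le
    exact mul_le_mul h5 hssqL (by positivity) (mul_nonneg hb0.le hξ0.le)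
  have e5 : (724/10)*t^6 + t^5*ξ/50 ≤ (((141/100)*t)*ξ*((19881/10000)*t^2))*((282/100)*t)^2 := by
    have h10 : 10*t*t^5 ≤ ξ*t^5 := mul_le_mul_of_nonneg_right hξt10 (pow_pos ht0 5).le
    nlinarith [h10, mul_pos (pow_pos ht0 5) hξ0]
  have e6 : (b-s)^2*((282/100)*t)^2 ≤ (b*ξ*s^2)*((282/100)*t)^2 :=
    calc (b-s)^2*((282/100)*t)^2 ≤ (((141/100)*t)*ξ*((19881/10000)*t^2))*((282/100)*t)^2 := le_trans e3 e5
      _ ≤ (b*ξ*s^2)*((282/100)*t)^2 := mul_le_mul_of_nonneg_right e4 (by positivity)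
  exact le_of_mul_le_mul_right e6 (by positivity)

-- the final scalar inequality
private lemma core {y ξ b c β P : ℝ} (hy : 3 ≤ y) (hξ0 : 0 < ξ) (hξ : ξ ≤ 1/10)
    (hb0 : 0 < b) (hb3 : 2*b ≤ (3/10)*ξ) (hβ0 : 0 ≤ β) (hβ : β ≤ b*ξ)
    (hc0 : 0 ≤ c) (hP : 0 ≤ P) :
    0 ≤ P + 2*b*ξ*y^2 + 2*ξ*y + c*((y-1-ξ)*(y+1-ξ)) - ξ^2 - 2*b*ξ^2*y - 2*b*y - β*y^2 - 4*b^2*y^2 := by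
  have hy0 : (0:ℝ) < y := by linarith
  have hD : (0:ℝ) ≤ (y-1-ξ)*(y+1-ξ) := by nlinarith
  have g0 : 0 ≤ c*((y-1-ξ)*(y+1-ξ)) := mul_nonneg hc0 hD
  have g1 : β*y^2 ≤ b*ξ*y^2 := mul_le_mul_of_nonneg_right hβ (sq_nonneg y)
  have g2 : 4*b^2*y^2 ≤ (6/10)*(b*ξ*y^2) := by
    nlinarith [mul_nonneg (mul_nonneg (by linarith : (0:ℝ) ≤ (3/10)*ξ - 2*b) (by linarith : (0:ℝ) ≤ 2*b)) (sq_nonneg y)]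
  have g3 : 2*b*y ≤ (3/10)*(ξ*y) := by
    nlinarith [mul_le_mul_of_nonneg_right hb3 hy0.le]
  have g4 : 2*b*ξ^2*y ≤ (3/1000)*(ξ*y) := by
    nlinarith [mul_le_mul_of_nonneg_right hb3 (mul_nonneg (mul_nonneg hξ0.le hξ0.le) hy0.le), mul_pos (mul_pos hξ0 hξ0) hy0, mul_pos hξ0 hy0]
  have g5 : ξ^2 ≤ (1/30)*(ξ*y) := by nlinarith [mul_pos hξ0 hy0]
  have g6 : 0 ≤ b*ξ*y^2 := by positivity
  have g7 : 0 ≤ ξ*y := by positivity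
  linarith

lemma key (t y ξ a b c s : ℝ)
    (ht0 : 0 < t) (ht : t ≤ 1/1000)
    (hy : 3 ≤ y)
    (hξ0 : 0 < ξ) (hξ : ξ ≤ 1/10) (hξt : t ≤ ξ^2)
    (ha : (a - 2*t^2)^2 ≤ t^4*(t*ξ)/100)
    (hb0 : 0 < b) (hb2 : b^2 = (1+t^2)^2*(1+t)^2*(t^4+2*t^2))
    (hc : c = (2*t+t^2)*(t^4+2*t^2))
    (hs0 : 0 < s) (hs2 : s^2 = (1-t)*a) :
    (1 - s + (b/s)/(y-1-ξ)) * (1 + s - (b/s)/(y+1-ξ)) * (1 + a - 2*b/y - (1-c)/y^2) ≥ 1 := by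
  have hy0 : (0:ℝ) < y := by linarith
  have hd1 : (0:ℝ) < y - 1 - ξ := by linarith
  have hd2 : (0:ℝ) < y + 1 - ξ := by linarith
  have hDpos : (0:ℝ) < (y-1-ξ)*(y+1-ξ) := mul_pos hd1 hd2
  have hsne : s ≠ 0 := ne_of_gt hs0
  have hyne : y ≠ 0 := ne_of_gt hy0
  have hd1ne : y - 1 - ξ ≠ 0 := ne_of_gt hd1
  have hd2ne : y + 1 - ξ ≠ 0 := ne_of_gt hd2
  have hξt10 : 10*t ≤ ξ := by
    have := mul_le_mul_of_nonneg_right hξ hξ0.le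
    nlinarith [this]
  have haB := abnd ht0 ht hξ0 hξ ha
  obtain ⟨haL', haU'⟩ := abs_le.mp haB
  have haL : (1999/1000)*t^2 ≤ a := by nlinarith
  have haU : a ≤ (2001/1000)*t^2 := by nlinarith
  have ha0 : 0 < a := by nlinarith [pow_pos ht0 2]
  obtain ⟨hbL, hbU⟩ := bbnd ht0 ht hb0 hb2
  obtain ⟨hsL, hsU⟩ := sbnd ht0 ht haL haU hs0 hs2
  obtain ⟨hc0, hc1⟩ := cbnd ht0 ht hc
  have hbs := crux ht0 ht hξ0 hξ hξt10 ha hb0 hbL hb2 hsL hs2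
  have hB1 : (b/s - 1)^2 ≤ b*ξ := by
    have e : b/s - 1 = (b-s)/s := by field_simp
    rw [e, div_pow, div_le_iff₀ (by positivity)]
    linarith [hbs]
  have hB0 : 0 ≤ b/s := by positivity
  have hB2 : b/s ≤ 2 := by rw [div_le_iff₀ hs0]; linarith
  -- algebraic identities
  have h1 : (1 - s + (b/s)/(y-1-ξ)) * (1 + s - (b/s)/(y+1-ξ))
      = 1 + (-s^2 + (2*b*(y-ξ) + 2*(b/s) - (b/s)^2)/((y-1-ξ)*(y+1-ξ))) := by
    field_simp
    ring
  have h3 : (-s^2 + (2*b*(y-ξ) + 2*(b/s) - (b/s)^2)/((y-1-ξ)*(y+1-ξ)))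
      + (a - 2*b/y - (1-c)/y^2)
      = (a - s^2) + 2*b*(1+ξ*y-ξ^2)/(((y-1-ξ)*(y+1-ξ))*y)
        + (1 + 2*ξ*y - ξ^2 + c*((y-1-ξ)*(y+1-ξ)) - (b/s-1)^2*y^2)/(((y-1-ξ)*(y+1-ξ))*y^2) := by
    field_simp
    ring
  -- bounds on the product term
  have hN0 : 0 ≤ 2*b*(y-ξ) + 2*(b/s) - (b/s)^2 := by
    have q1 : 0 ≤ 2*b*(y-ξ) := mul_nonneg (by linarith) (by linarith)
    have q2 : 0 ≤ (b/s)*(2 - b/s) := mul_nonneg hB0 (by linarith)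
    linarith [q1, q2]
  have hN1 : 2*b*(y-ξ) + 2*(b/s) - (b/s)^2 ≤ 2*b*y + 1 := by
    have q1 : 0 ≤ 2*b*ξ := mul_nonneg (by linarith) hξ0.le
    linarith [sq_nonneg (b/s - 1), q1]
  have hinvy : (2*b*y+1)/y^2 = 2*b/y + 1/y^2 := by field_simp
  have hvlb : a - 2*b/y - (1-c)/y^2 ≥ -((2*b*y+1)/y^2) := by
    rw [hinvy]
    have h1c : (1-c)/y^2 ≤ 1/y^2 := by
      rw [div_le_div_iff₀ (by positivity) (by positivity)]
      linarith [mul_nonneg hc0 (sq_nonneg y)]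
    linarith [ha0.le, h1c]
  have hNv : ((2*b*(y-ξ) + 2*(b/s) - (b/s)^2)/((y-1-ξ)*(y+1-ξ))) * (a - 2*b/y - (1-c)/y^2)
      ≥ -((2*b*y+1)^2/(((y-1-ξ)*(y+1-ξ))*y^2)) := by
    have hND : 0 ≤ (2*b*(y-ξ) + 2*(b/s) - (b/s)^2)/((y-1-ξ)*(y+1-ξ)) := div_nonneg hN0 hDpos.le
    have step1 := mul_le_mul_of_nonneg_left hvlb hND
    have hq : (2*b*(y-ξ) + 2*(b/s) - (b/s)^2)/((y-1-ξ)*(y+1-ξ)) ≤ (2*b*y+1)/((y-1-ξ)*(y+1-ξ)) :=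
      (div_le_div_iff_of_pos_right hDpos).mpr hN1
    have hqy : 0 ≤ (2*b*y+1)/y^2 := by positivity
    have step2 : ((2*b*(y-ξ) + 2*(b/s) - (b/s)^2)/((y-1-ξ)*(y+1-ξ))) * ((2*b*y+1)/y^2)
        ≤ ((2*b*y+1)/((y-1-ξ)*(y+1-ξ))) * ((2*b*y+1)/y^2) :=
      mul_le_mul_of_nonneg_right hq hqy
    have step3 : ((2*b*y+1)/((y-1-ξ)*(y+1-ξ))) * ((2*b*y+1)/y^2)
        = (2*b*y+1)^2/(((y-1-ξ)*(y+1-ξ))*y^2) := by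
      field_simp
    linarith [step1, step2, step3]
  have hsv : (-s^2) * (a - 2*b/y - (1-c)/y^2) ≥ -a^2 := by
    have e : (-s^2) * (a - 2*b/y - (1-c)/y^2) = -(s^2*a) + s^2*(2*(b/y)) + s^2*((1-c)/y^2) := by ring
    rw [e]
    have q1 : 0 ≤ s^2*(2*(b/y)) := by positivity
    have q2 : 0 ≤ s^2*((1-c)/y^2) := mul_nonneg (sq_nonneg s) (div_nonneg (by linarith) (by positivity))
    have q3 : s^2*a ≤ a^2 := by
      rw [hs2]
      linarith [mul_nonneg ht0.le (mul_nonneg ha0.le ha0.le)]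
    linarith
  have h4 : (-s^2 + (2*b*(y-ξ) + 2*(b/s) - (b/s)^2)/((y-1-ξ)*(y+1-ξ))) * (a - 2*b/y - (1-c)/y^2)
      ≥ -a^2 - (2*b*y+1)^2/(((y-1-ξ)*(y+1-ξ))*y^2) := by
    have e : (-s^2 + (2*b*(y-ξ) + 2*(b/s) - (b/s)^2)/((y-1-ξ)*(y+1-ξ))) * (a - 2*b/y - (1-c)/y^2)
        = (-s^2) * (a - 2*b/y - (1-c)/y^2)
          + ((2*b*(y-ξ) + 2*(b/s) - (b/s)^2)/((y-1-ξ)*(y+1-ξ))) * (a - 2*b/y - (1-c)/y^2) := by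
      ring
    rw [e]; linarith [hsv, hNv]
  -- the final scalar estimate
  have htt : t*t ≤ (1/1000)*t := mul_le_mul_of_nonneg_right ht ht0.le
  have hat : a ≤ t := by linarith [haU, htt]
  have hsa : 0 ≤ a - s^2 - a^2 := by
    rw [hs2]
    linarith [mul_nonneg ha0.le (by linarith : (0:ℝ) ≤ t - a)]
  have hP : 0 ≤ (a - s^2 - a^2)*(((y-1-ξ)*(y+1-ξ))*y^2) := mul_nonneg hsa (by positivity)
  have hb3 : 2*b ≤ (3/10)*ξ := by linarith
  have hcore := core hy hξ0 hξ hb0 hb3 (sq_nonneg (b/s - 1)) hB1 hc0 hP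
  have h5 : (a - s^2) + 2*b*(1+ξ*y-ξ^2)/(((y-1-ξ)*(y+1-ξ))*y)
        + (1 + 2*ξ*y - ξ^2 + c*((y-1-ξ)*(y+1-ξ)) - (b/s-1)^2*y^2)/(((y-1-ξ)*(y+1-ξ))*y^2)
        - a^2 - (2*b*y+1)^2/(((y-1-ξ)*(y+1-ξ))*y^2) ≥ 0 := by
    have hid : (a - s^2) + 2*b*(1+ξ*y-ξ^2)/(((y-1-ξ)*(y+1-ξ))*y)
        + (1 + 2*ξ*y - ξ^2 + c*((y-1-ξ)*(y+1-ξ)) - (b/s-1)^2*y^2)/(((y-1-ξ)*(y+1-ξ))*y^2)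
        - a^2 - (2*b*y+1)^2/(((y-1-ξ)*(y+1-ξ))*y^2)
        = ((a - s^2 - a^2)*(((y-1-ξ)*(y+1-ξ))*y^2) + 2*b*ξ*y^2 + 2*ξ*y + c*((y-1-ξ)*(y+1-ξ))
            - ξ^2 - 2*b*ξ^2*y - 2*b*y - (b/s-1)^2*y^2 - 4*b^2*y^2)/(((y-1-ξ)*(y+1-ξ))*y^2) := by
      field_simp
      ring
    rw [hid]
    exact div_nonneg (by linarith [hcore]) (by positivity)
  -- assemble
  rw [h1]
  have hfin : (1 + (-s^2 + (2*b*(y-ξ) + 2*(b/s) - (b/s)^2)/((y-1-ξ)*(y+1-ξ))))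
      * (1 + a - 2*b/y - (1-c)/y^2)
      = 1 + (((-s^2 + (2*b*(y-ξ) + 2*(b/s) - (b/s)^2)/((y-1-ξ)*(y+1-ξ))) + (a - 2*b/y - (1-c)/y^2))
          + (-s^2 + (2*b*(y-ξ) + 2*(b/s) - (b/s)^2)/((y-1-ξ)*(y+1-ξ))) * (a - 2*b/y - (1-c)/y^2)) := by
    ring
  rw [hfin, ge_iff_le, le_add_iff_nonneg_right]
  rw [h3]
  linarith [h4, h5]

theorem stmt2 (ν K : ℝ) (hν : 11/8 < ν) (hK : 0 < K) :
    ∃ ε₀ > (0:ℝ), ∀ ε : ℝ, 0 < ε → ε ≤ ε₀ →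
      ∀ a : ℝ, |a - 2 * ε| ≤ K * ε ^ ν →
      ∀ l : ℕ, 2 ≤ l →
      (1 - Real.sqrt ((1 - Real.sqrt ε) * a)
          + (bEps ε / Real.sqrt ((1 - Real.sqrt ε) * a))
              / (2 * (l : ℝ) - 2 - ε ^ (min (2 * (ν - 11/8)) (1/4))))
        * (1 + Real.sqrt ((1 - Real.sqrt ε) * a)
          - (bEps ε / Real.sqrt ((1 - Real.sqrt ε) * a))
              / (2 * (l : ℝ) - ε ^ (min (2 * (ν - 11/8)) (1/4))))
        * (1 + a - 2 * bEps ε / (2 * (l : ℝ) - 1) - (1 - cEps ε) / (2 * (l : ℝ) - 1) ^ 2)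
      ≥ 1 := by
  have hΘ0 : 0 < min (2 * (ν - 11/8)) (1/4) := lt_min (by linarith) (by norm_num)
  have hΘ4 : min (2 * (ν - 11/8)) (1/4) ≤ 1/4 := min_le_right _ _
  have hΘν : min (2 * (ν - 11/8)) (1/4) ≤ 2 * (ν - 11/8) := min_le_left _ _
  refine ⟨min (min (1/10^8) ((1/(10*K))^8)) ((1/10) ^ ((1:ℝ)/(min (2 * (ν - 11/8)) (1/4)))), ?_, ?_⟩
  · have h1 : (0:ℝ) < (1/(10*K))^8 := by positivity
    have h2 : (0:ℝ) < (1/10:ℝ) ^ ((1:ℝ)/(min (2 * (ν - 11/8)) (1/4))) :=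
      Real.rpow_pos_of_pos (by norm_num) _
    have h3 : (0:ℝ) < 1/10^8 := by norm_num
    exact lt_min (lt_min h3 h1) h2
  intro ε hε hεε₀ a haK l hl
  set Θ : ℝ := min (2 * (ν - 11/8)) (1/4) with hΘdef
  have hε8 : ε ≤ 1/10^8 := le_trans hεε₀ (le_trans (min_le_left _ _) (min_le_left _ _))
  have hεK : ε ≤ (1/(10*K))^8 := le_trans hεε₀ (le_trans (min_le_left _ _) (min_le_right _ _))
  have hεΘ : ε ≤ (1/10:ℝ) ^ ((1:ℝ)/Θ) := le_trans hεε₀ (min_le_right _ _)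
  have hε1 : ε ≤ 1 := by
    have : (1:ℝ)/10^8 ≤ 1 := by norm_num
    linarith
  -- t
  set t : ℝ := Real.sqrt ε with htdef
  have ht0 : 0 < t := Real.sqrt_pos.mpr hε
  have ht2 : t^2 = ε := Real.sq_sqrt hε.le
  have ht : t ≤ 1/1000 := by
    refine sqle (by norm_num) ?_ ht0.le
    rw [ht2]
    have : (1:ℝ)/10^8 ≤ (1/1000:ℝ)^2 := by norm_num
    linarith
  -- ξ
  set ξ : ℝ := ε ^ Θ with hξdef
  have hξ0 : 0 < ξ := Real.rpow_pos_of_pos hε _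
  have hξ : ξ ≤ 1/10 := by
    have h1 : ε ^ Θ ≤ ((1/10:ℝ) ^ ((1:ℝ)/Θ)) ^ Θ := Real.rpow_le_rpow hε.le hεΘ hΘ0.le
    have h2 : ((1/10:ℝ) ^ ((1:ℝ)/Θ)) ^ Θ = (1/10:ℝ) ^ (((1:ℝ)/Θ) * Θ) :=
      (Real.rpow_mul (by norm_num) _ _).symm
    have h3 : ((1:ℝ)/Θ) * Θ = 1 := by field_simp
    rw [h3, Real.rpow_one] at h2
    rw [hξdef]
    linarith [h1, h2.le, h2.ge]
  have hξt : t ≤ ξ^2 := by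
    have e1 : ξ^2 = ε ^ (Θ*2) := by
      rw [hξdef, ← Real.rpow_natCast (ε ^ Θ) 2, ← Real.rpow_mul hε.le]
      norm_num
    have e2 : t = ε ^ ((1:ℝ)/2) := by rw [htdef, Real.sqrt_eq_rpow]
    rw [e1, e2]
    exact Real.rpow_le_rpow_of_exponent_ge hε hε1 (by linarith)
  -- the bound on a
  have ha' : (a - 2*t^2)^2 ≤ t^4*(t*ξ)/100 := by
    have h1 : (a - 2*ε)^2 ≤ (K * ε^ν)^2 := by
      have h := pow_le_pow_left₀ (abs_nonneg (a - 2*ε)) haK 2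
      rwa [sq_abs] at h
    have h2 : (K*ε^ν)^2 = K^2 * ε^(ν*2) := by
      rw [mul_pow, ← Real.rpow_natCast (ε ^ ν) 2, ← Real.rpow_mul hε.le]
      norm_num
    have h3 : ε^(ν*2) ≤ ε^((11:ℝ)/4 + Θ) :=
      Real.rpow_le_rpow_of_exponent_ge hε hε1 (by linarith)
    have h4 : ε^((11:ℝ)/4 + Θ) = ε^((1:ℝ)/4) * (ε^((2:ℕ):ℝ) * (ε^((1:ℝ)/2) * ε^Θ)) := by
      rw [← Real.rpow_add hε, ← Real.rpow_add hε, ← Real.rpow_add hε]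
      congr 1
      push_cast
      ring
    have h5 : ε^((2:ℕ):ℝ) = t^4 := by
      rw [Real.rpow_natCast, ← ht2]; ring
    have h6 : ε^((1:ℝ)/2) = t := by rw [htdef, Real.sqrt_eq_rpow]
    have hKε : K^2 * ε^((1:ℝ)/4) ≤ 1/100 := by
      have q0 : (0:ℝ) ≤ 1/(10*K) := by positivity
      have q1 : ε^((1:ℝ)/4) ≤ ((1/(10*K))^(8:ℕ))^((1:ℝ)/4) := Real.rpow_le_rpow hε.le hεK (by norm_num)
      have q2 : ((1/(10*K))^(8:ℕ))^((1:ℝ)/4) = (1/(10*K))^(2:ℕ) := by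
        rw [← Real.rpow_natCast (1/(10*K)) 8, ← Real.rpow_mul q0,
          show ((8:ℕ):ℝ) * ((1:ℝ)/4) = ((2:ℕ):ℝ) by norm_num, Real.rpow_natCast]
      have q3 : K^2 * ((1/(10*K))^(2:ℕ)) = 1/100 := by
        field_simp
        ring
      have q4 : K^2 * ε^((1:ℝ)/4) ≤ K^2 * ((1/(10*K))^(2:ℕ)) := by
        rw [q2] at q1
        exact mul_le_mul_of_nonneg_left q1 (sq_nonneg K)
      linarith
    have hfin : K^2 * ε^(ν*2) ≤ t^4*(t*ξ)/100 := by
      have r1 : K^2 * ε^(ν*2) ≤ K^2 * ε^((11:ℝ)/4 + Θ) := mul_le_mul_of_nonneg_left h3 (sq_nonneg K)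
      have r2 : K^2 * ε^((11:ℝ)/4 + Θ) = (K^2 * ε^((1:ℝ)/4)) * (t^4 * (t * ξ)) := by
        rw [h4, h5, h6, hξdef]; ring
      have r3 : (K^2 * ε^((1:ℝ)/4)) * (t^4 * (t * ξ)) ≤ (1/100) * (t^4 * (t * ξ)) := by
        apply mul_le_mul_of_nonneg_right hKε
        have : 0 < t^4 * (t*ξ) := by positivity
        linarith
      linarith [r1, r2.le, r2.ge, r3]
    calc (a - 2*t^2)^2 = (a - 2*ε)^2 := by rw [ht2]
      _ ≤ (K * ε^ν)^2 := h1
      _ = K^2 * ε^(ν*2) := h2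
      _ ≤ t^4*(t*ξ)/100 := hfin
  -- b and c
  have hsqe : (0:ℝ) < ε^2 + 2*ε := by nlinarith
  have hb0 : 0 < bEps ε := by
    unfold bEps
    have h1 : 0 < Real.sqrt (ε^2 + 2*ε) := Real.sqrt_pos.mpr hsqe
    have h2 : (0:ℝ) < 1 + ε := by linarith
    have h3 : (0:ℝ) < 1 + Real.sqrt ε := by positivity
    positivity
  have hb2 : (bEps ε)^2 = (1+t^2)^2*(1+t)^2*(t^4+2*t^2) := by
    unfold bEps
    rw [mul_pow, mul_pow, Real.sq_sqrt hsqe.le, ← htdef, ← ht2]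
    ring
  have hcval : cEps ε = (2*t+t^2)*(t^4+2*t^2) := by
    unfold cEps
    rw [← htdef, ← ht2]
    ring
  -- s
  have haB := abnd ht0 ht hξ0 hξ ha'
  obtain ⟨haL', haU'⟩ := abs_le.mp haB
  have ha0 : 0 < a := by nlinarith [pow_pos ht0 2]
  have hsarg : 0 < (1-t)*a := mul_pos (by linarith) ha0
  have hs0 : 0 < Real.sqrt ((1-t)*a) := Real.sqrt_pos.mpr hsarg
  have hs2 : (Real.sqrt ((1-t)*a))^2 = (1-t)*a := Real.sq_sqrt hsarg.le
  -- y
  have hl' : (2:ℝ) ≤ (l:ℝ) := by exact_mod_cast hl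
  have hy : (3:ℝ) ≤ 2*(l:ℝ)-1 := by linarith
  have H := key t (2*(l:ℝ)-1) ξ a (bEps ε) (cEps ε) (Real.sqrt ((1-t)*a))
    ht0 ht hy hξ0 hξ hξt ha' hb0 hb2 hcval hs0 hs2
  have e1 : 2*(l:ℝ) - 2 - ξ = 2*(l:ℝ)-1 - 1 - ξ := by ring
  have e2 : 2*(l:ℝ) - ξ = 2*(l:ℝ)-1 + 1 - ξ := by ring
  rw [e1, e2]
  exact H
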